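/- For every formal power series f over a commutative ring and every natural number k, Φ(x^k · f(x)^{k+1}) = x^k · Φ(f)^{k+1}, where Φ is the run transform. -/

import Mathlib

open PowerSeries MvPowerSeries Finset

/-- Substitution of a bivariate power series with zero constant term (and positive
order in every monomial) into a univariate formal power series, defined
coefficient-wise. -/
noncomputable def substPS {R : Type*} [CommRing R]
    (a : MvPowerSeries (Fin 2) R) (f : PowerSeries R) : MvPowerSeries (Fin 2) R :=
  fun d => ∑ n ∈ Finset.range (d 0 + d 1 + 1),
    (PowerSeries.coeff n f) * MvPowerSeries.coeff d (a ^ n)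

/-- The run transform `Φ(f)(x,y) = ((1-x)/(1-xy)) · f(x(1-x)/(1-xy))`. -/
noncomputable def runTransform {R : Type*} [CommRing R] (f : PowerSeries R) :
    MvPowerSeries (Fin 2) R :=
  (1 - MvPowerSeries.X 0) * MvPowerSeries.invOfUnit (1 - MvPowerSeries.X 0 * MvPowerSeries.X 1) 1 *
    substPS ((MvPowerSeries.X 0 * (1 - MvPowerSeries.X 0)) *
      MvPowerSeries.invOfUnit (1 - MvPowerSeries.X 0 * MvPowerSeries.X 1) 1) f

/-!
Write `Φ(f) = c · f(x c)` with `x = X₀` and `c = (1 - x)/(1 - x y)`. Substituting a series with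
zero constant term is a ring homomorphism, so `Φ(X^k f^(k+1)) = c (x c)^k f(x c)^(k+1)
= x^k (c f(x c))^(k+1)`. The truncated sum defining `substPS` is Mathlib's substitution, because
`a ^ n` has no monomials of total degree below `n` when `a` has zero constant term.
-/

namespace MvPowerSeries

variable {σ R : Type*} [CommRing R]

theorem coeff_pow_eq_zero_of_degree_lt {a : MvPowerSeries σ R} (ha : constantCoeff a = 0)
    {n : ℕ} {d : σ →₀ ℕ} (hd : d.degree < n) : coeff d (a ^ n) = 0 :=
  coeff_of_lt_order <| (Nat.cast_lt.mpr hd).trans_le (le_order_pow_of_constantCoeff_eq_zero n ha)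

end MvPowerSeries

namespace PowerSeries

theorem mul_subst_X_pow_mul_pow {σ R : Type*} [CommRing R] {x c : MvPowerSeries σ R}
    (hxc : HasSubst (x * c)) (f : PowerSeries R) (k : ℕ) :
    c * (X ^ k * f ^ (k + 1)).subst (x * c) = x ^ k * (c * f.subst (x * c)) ^ (k + 1) := by
  rw [subst_mul hxc, subst_pow hxc, subst_pow hxc, subst_X hxc]
  ring

end PowerSeries

theorem substPS_eq_subst {R : Type*} [CommRing R] {a : MvPowerSeries (Fin 2) R}
    (ha : MvPowerSeries.constantCoeff a = 0) (f : PowerSeries R) :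
    substPS a f = f.subst a := by
  ext d
  rw [PowerSeries.coeff_subst (.of_constantCoeff_zero ha),
    finsum_eq_sum_of_support_subset (s := range (d 0 + d 1 + 1))]
  · rfl
  · intro n hn
    rw [coe_range, Set.mem_Iio, Nat.lt_succ_iff, ← Fin.sum_univ_two (f := (d ·)),
      ← Finsupp.degree_eq_sum]
    contrapose! hn
    rw [Function.notMem_support, MvPowerSeries.coeff_pow_eq_zero_of_degree_lt ha hn, smul_zero]

/-- `Φ(x^k · f^(k+1)) = x^k · Φ(f)^(k+1)`. -/
theorem runTransform_pow {R : Type*} [CommRing R] (f : PowerSeries R) (k : ℕ) :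
    runTransform (PowerSeries.X ^ k * f ^ (k + 1)) =
      MvPowerSeries.X 0 ^ k * runTransform f ^ (k + 1) := by
  have hxc : MvPowerSeries.constantCoeff (MvPowerSeries.X 0 * ((1 - MvPowerSeries.X 0) *
      MvPowerSeries.invOfUnit (1 - MvPowerSeries.X 0 * MvPowerSeries.X 1) 1) :
        MvPowerSeries (Fin 2) R) = 0 := by
    simp
  rw [runTransform, runTransform, mul_assoc (MvPowerSeries.X 0), substPS_eq_subst hxc,
    substPS_eq_subst hxc]
  exact PowerSeries.mul_subst_X_pow_mul_pow (.of_constantCoeff_zero hxc) f k
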